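/- arXiv:1909.04304 — 4 statements merged into one kernel-verified Lean document; each statement's English description precedes it below -/
import Mathlib

section
/- Let K be a monoidal triangulated category and σ : K → 𝒳 a support datum with values in closed subsets of a topological space X. Then for every x ∈ X, the collection f_σ(x) = { A ∈ K : x ∉ σ(A) } is a prime thick ideal of K, and σ(A) = f_σ⁻¹(V(A)) for all objects A, so f_σ : X → Spc K is the unique continuous map with this property. -/
open CategoryTheory CategoryTheory.Limits CategoryTheory.Pretriangulated
open CategoryTheory.MonoidalCategory ZeroObject

universe u v

variable (C : Type u) [Category.{v} C] [HasZeroObject C] [HasShift C ℤ]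
  [Preadditive C] [∀ n : ℤ, (CategoryTheory.shiftFunctor C n).Additive]
  [Pretriangulated C] [HasBinaryBiproducts C] [MonoidalCategory C]

/-- A thick (two-sided) ideal of a monoidal triangulated category: a replete
collection of objects containing `0`, closed under shifts, extensions
(distinguished triangles), direct summands, and left/right tensoring with
arbitrary objects. -/
structure ThickIdeal where
  carrier : Set C
  zero_mem : (0 : C) ∈ carrier
  iso_closed : ∀ {A B : C}, (A ≅ B) → A ∈ carrier → B ∈ carrier
  shift_mem : ∀ (n : ℤ) {A : C}, A ∈ carrier → A⟦n⟧ ∈ carrier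
  ext_mem : ∀ (T : Triangle C), (T ∈ distTriang C) →
    T.obj₁ ∈ carrier → T.obj₂ ∈ carrier → T.obj₃ ∈ carrier
  summand_mem : ∀ {A B : C}, (A ⊞ B) ∈ carrier → A ∈ carrier
  tensor_left_mem : ∀ (B : C) {A : C}, A ∈ carrier → (B ⊗ A) ∈ carrier
  tensor_right_mem : ∀ (B : C) {A : C}, A ∈ carrier → (A ⊗ B) ∈ carrier

/-- A thick ideal is proper if it is not all of `C`. -/
def ThickIdeal.IsProper (I : ThickIdeal C) : Prop := I.carrier ≠ Set.univ

/-- A prime ideal: a proper thick ideal `P` such that `I ⊗ J ⊆ P` implies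
`I ⊆ P` or `J ⊆ P` for all thick ideals `I`, `J`. -/
def ThickIdeal.IsPrime (P : ThickIdeal C) : Prop :=
  P.IsProper ∧ ∀ I J : ThickIdeal C,
    (∀ a ∈ I.carrier, ∀ b ∈ J.carrier, a ⊗ b ∈ P.carrier) →
      I.carrier ⊆ P.carrier ∨ J.carrier ⊆ P.carrier

/-- A semiprime ideal: an intersection of prime ideals. -/
def ThickIdeal.IsSemiprime (Q : ThickIdeal C) : Prop :=
  ∃ S : Set (ThickIdeal C), (∀ P ∈ S, P.IsPrime) ∧
    Q.carrier = ⋂ P ∈ S, ThickIdeal.carrier P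

/-- The underlying set of the smallest thick ideal containing `S`. -/
def thickIdealGen (S : Set C) : Set C :=
  {A : C | ∀ I : ThickIdeal C, S ⊆ I.carrier → A ∈ I.carrier}

/-- The Balmer spectrum: the set of prime thick ideals of `C`. -/
def Spc := {P : ThickIdeal C // P.IsPrime}

variable {C}

/-- The Balmer support of an object: the primes not containing it. -/
def suppV (A : C) : Set (Spc C) := {P : Spc C | A ∉ P.1.carrier}

/-- The Zariski topology on the Balmer spectrum, whose closed sets are
generated by the sets `V(S) = {P : P ∩ S = ∅}`. -/
instance : TopologicalSpace (Spc C) :=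
  TopologicalSpace.generateFrom
    {U : Set (Spc C) | ∃ S : Set C, U = {P : Spc C | ∃ A ∈ S, A ∈ P.1.carrier}}

/-- The extension `Φ_σ` of a support-type map `σ` to collections of objects. -/
def Phi {X : Type*} (σ : C → Set X) (S : Set C) : Set X := ⋃ A ∈ S, σ A

variable (C)

/-- A (noncommutative) support datum on `C` with values in subsets of `X`. -/
structure SupportDatum (X : Type*) where
  σ : C → Set X
  zero : σ 0 = ∅
  unit : σ (𝟙_ C) = Set.univ
  sum : ∀ A B : C, σ (A ⊞ B) = σ A ∪ σ B
  shift : ∀ A : C, σ (A⟦(1 : ℤ)⟧) = σ A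
  triangle : ∀ T : Triangle C, (T ∈ distTriang C) →
    σ T.obj₁ ⊆ σ T.obj₂ ∪ σ T.obj₃
  tensor : ∀ A B : C, (⋃ D : C, σ (A ⊗ D ⊗ B)) = σ A ∩ σ B

/-- A (noncommutative) weak support datum on `C` with values in subsets of `X`. -/
structure WeakSupportDatum (X : Type*) where
  σ : C → Set X
  zero : σ 0 = ∅
  unit : σ (𝟙_ C) = Set.univ
  sum : ∀ A B : C, σ (A ⊞ B) = σ A ∪ σ B
  shift : ∀ A : C, σ (A⟦(1 : ℤ)⟧) = σ A
  triangle : ∀ T : Triangle C, (T ∈ distTriang C) →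
    σ T.obj₁ ⊆ σ T.obj₂ ∪ σ T.obj₃
  phi_tensor : ∀ I J : ThickIdeal C,
    Phi σ (Set.image2 (· ⊗ ·) I.carrier J.carrier) =
      Phi σ I.carrier ∩ Phi σ J.carrier

variable {C}

/-- A subset of a topological space is specialization closed if it is a union
of closed subsets. -/
def SpecClosed {X : Type*} [TopologicalSpace X] (W : Set X) : Prop :=
  ∃ F : Set (Set X), (∀ s ∈ F, IsClosed s) ∧ W = ⋃₀ F

/-- `S_sp`: the largest specialization-closed subset contained in `S`, i.e. the
union of all closed sets contained in `S`. -/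
def spSet {X : Type*} [TopologicalSpace X] (S : Set X) : Set X :=
  ⋃₀ {F : Set X | IsClosed F ∧ F ⊆ S}

/-!
Thickness of `{A | x ∉ σ A}` is the triangle axiom applied to rotations (using shift
invariance), the ideal property and primality both come from
`⋃_D σ(A ⊗ D ⊗ B) = σ A ∩ σ B`, and properness from `σ 𝟙 = X`. The identity
`σ A = f⁻¹ (V A)` holds by construction and determines `f` pointwise; since the sets `σ A` are
closed, the preimages of the basic opens of `Spc C` are open.
-/

lemma ThickIdeal.carrier_injective : Function.Injective (ThickIdeal.carrier (C := C)) := by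
  rintro ⟨⟩ ⟨⟩ rfl
  rfl

lemma Spc.continuous_of_isClosed_preimage_suppV {X : Type*} [TopologicalSpace X]
    {f : X → Spc C} (hf : ∀ A : C, IsClosed (f ⁻¹' suppV A)) : Continuous f := by
  refine continuous_generateFrom_iff.2 ?_
  rintro _ ⟨S, rfl⟩
  have hbasic : {P : Spc C | ∃ A ∈ S, A ∈ P.1.carrier} = ⋃ A ∈ S, (suppV A)ᶜ := by
    ext P
    simp [suppV]
  rw [hbasic, Set.preimage_iUnion₂]
  exact isOpen_biUnion fun A _ => (hf A).isOpen_compl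

namespace SupportDatum

variable {X : Type*} (σ : SupportDatum C X)

-- `A → B → 0 → A⟦1⟧` is distinguished, so the triangle axiom gives `σ A ⊆ σ B ∪ σ 0`.
lemma σ_subset_of_iso {A B : C} (e : A ≅ B) : σ.σ A ⊆ σ.σ B := by
  have hT : Triangle.mk e.hom (0 : B ⟶ 0) 0 ∈ distTriang C :=
    (Triangle.distinguished_iff_of_isZero₃ _ (isZero_zero C)).2 (inferInstanceAs (IsIso e.hom))
  simpa [σ.zero] using σ.triangle _ hT

lemma σ_eq_of_iso {A B : C} (e : A ≅ B) : σ.σ A = σ.σ B :=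
  (σ.σ_subset_of_iso e).antisymm (σ.σ_subset_of_iso e.symm)

lemma σ_shift (n : ℤ) (A : C) : σ.σ (A⟦n⟧) = σ.σ A := by
  induction n using Int.induction_on with
  | zero => exact σ.σ_eq_of_iso ((shiftFunctorZero C ℤ).app A)
  | succ n ih =>
      have e : A⟦(n : ℤ) + 1⟧ ≅ A⟦(n : ℤ)⟧⟦(1 : ℤ)⟧ := (shiftFunctorAdd' C (n : ℤ) 1 _ rfl).app A
      rw [σ.σ_eq_of_iso e, σ.shift, ih]
  | pred n ih =>
      have e : A⟦-(n : ℤ)⟧ ≅ A⟦-(n : ℤ) - 1⟧⟦(1 : ℤ)⟧ :=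
        (shiftFunctorAdd' C (-(n : ℤ) - 1) 1 _ (by ring)).app A
      rwa [σ.σ_eq_of_iso e, σ.shift] at ih

lemma σ_tensor_subset_right (B A : C) : σ.σ (B ⊗ A) ⊆ σ.σ A := by
  rw [σ.σ_eq_of_iso (λ_ (B ⊗ A)).symm]
  intro x hx
  have hx' : x ∈ ⋃ D : C, σ.σ (𝟙_ C ⊗ D ⊗ A) := Set.mem_iUnion.2 ⟨B, hx⟩
  rw [σ.tensor] at hx'
  exact hx'.2

lemma σ_tensor_subset_left (A B : C) : σ.σ (A ⊗ B) ⊆ σ.σ A := by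
  rw [σ.σ_eq_of_iso (whiskerLeftIso A (ρ_ B).symm)]
  intro x hx
  have hx' : x ∈ ⋃ D : C, σ.σ (A ⊗ D ⊗ 𝟙_ C) := Set.mem_iUnion.2 ⟨B, hx⟩
  rw [σ.tensor] at hx'
  exact hx'.1

def idealAt (x : X) : ThickIdeal C where
  carrier := {A : C | x ∉ σ.σ A}
  zero_mem := by simp [σ.zero]
  iso_closed e hA hB := hA (σ.σ_subset_of_iso e.symm hB)
  shift_mem n A hA hx := hA ((σ.σ_shift n A).subset hx)
  ext_mem T hT h₁ h₂ h₃ := by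
    have h := σ.triangle T.rotate.rotate (rot_of_distTriang _ (rot_of_distTriang _ hT)) h₃
    change x ∈ σ.σ (T.obj₁⟦(1 : ℤ)⟧) ∪ σ.σ (T.obj₂⟦(1 : ℤ)⟧) at h
    rw [σ.shift, σ.shift] at h
    exact h.elim h₁ h₂
  summand_mem hAB hA := hAB (by rw [σ.sum]; exact Or.inl hA)
  tensor_left_mem B A hA hx := hA (σ.σ_tensor_subset_right B A hx)
  tensor_right_mem B A hA hx := hA (σ.σ_tensor_subset_left A B hx)

lemma idealAt_isPrime (x : X) : (σ.idealAt x).IsPrime := by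
  refine ⟨fun h => (h ▸ Set.mem_univ (𝟙_ C) : 𝟙_ C ∈ (σ.idealAt x).carrier) ?_, ?_⟩
  · rw [σ.unit]
    trivial
  · intro I J hIJ
    by_contra! hc
    obtain ⟨a, ha, hxa⟩ := Set.not_subset.1 hc.1
    obtain ⟨b, hb, hxb⟩ := Set.not_subset.1 hc.2
    have hx : x ∈ σ.σ a ∩ σ.σ b := ⟨not_not.1 hxa, not_not.1 hxb⟩
    rw [← σ.tensor] at hx
    obtain ⟨D, hD⟩ := Set.mem_iUnion.1 hx
    exact hIJ a ha (D ⊗ b) (J.tensor_left_mem D hb) hD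

def toSpc (x : X) : Spc C := ⟨σ.idealAt x, σ.idealAt_isPrime x⟩

lemma toSpc_preimage_suppV (A : C) : σ.toSpc ⁻¹' suppV A = σ.σ A := by
  ext x
  exact not_not

lemma continuous_toSpc [TopologicalSpace X] (hcl : ∀ A : C, IsClosed (σ.σ A)) :
    Continuous σ.toSpc :=
  Spc.continuous_of_isClosed_preimage_suppV fun A => σ.toSpc_preimage_suppV A ▸ hcl A

lemma eq_toSpc {f : X → Spc C} (hf : ∀ A : C, σ.σ A = f ⁻¹' suppV A) : f = σ.toSpc := by
  funext x
  refine Subtype.ext (ThickIdeal.carrier_injective ?_)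
  ext A
  change A ∈ (f x).1.carrier ↔ x ∉ σ.σ A
  rw [hf]
  exact not_not.symm

end SupportDatum

/-- universality of the Balmer spectrum for support data with
closed values. -/
theorem support_datum_final (X : Type*) [TopologicalSpace X]
    (σ : SupportDatum C X) (hcl : ∀ A : C, IsClosed (σ.σ A)) :
    (∀ x : X, ∃ P : ThickIdeal C, P.IsPrime ∧
      P.carrier = {A : C | x ∉ σ.σ A}) ∧
    ∃! f : X → Spc C, Continuous f ∧ ∀ A : C, σ.σ A = f ⁻¹' suppV A :=
  ⟨fun x => ⟨σ.idealAt x, σ.idealAt_isPrime x, rfl⟩,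
    σ.toSpc, ⟨σ.continuous_toSpc hcl, fun A => (σ.toSpc_preimage_suppV A).symm⟩,
    fun _ hf => σ.eq_toSpc hf.2⟩
end

section
/- Let K be a monoidal triangulated category in which every thick two-sided ideal is semiprime (an intersection of prime ideals). Then for any two thick ideals I and J of K, the thick ideal generated by I ⊗ J equals I ∩ J. -/
open CategoryTheory CategoryTheory.Limits CategoryTheory.Pretriangulated
open CategoryTheory.MonoidalCategory ZeroObject

universe u v

variable (C : Type u) [Category.{v} C] [HasZeroObject C] [HasShift C ℤ]
  [Preadditive C] [∀ n : ℤ, (CategoryTheory.shiftFunctor C n).Additive]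
  [Pretriangulated C] [HasBinaryBiproducts C] [MonoidalCategory C]

variable {C}

variable (C)

variable {C}

/-- The thick ideal generated by a set. -/
def genIdeal (S : Set C) : ThickIdeal C where
  carrier := thickIdealGen C S
  zero_mem I _ := I.zero_mem
  iso_closed e hA I hI := I.iso_closed e (hA I hI)
  shift_mem n _ hA I hI := I.shift_mem n (hA I hI)
  ext_mem T hT h1 h2 I hI := I.ext_mem T hT (h1 I hI) (h2 I hI)
  summand_mem hAB I hI := I.summand_mem (hAB I hI)
  tensor_left_mem B _ hA I hI := I.tensor_left_mem B (hA I hI)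
  tensor_right_mem B _ hA I hI := I.tensor_right_mem B (hA I hI)

/-- if every thick ideal is semiprime, then
`⟨I ⊗ J⟩ = I ∩ J` for all thick ideals `I`, `J`. -/
theorem gen_tensor_eq_inter (h : ∀ I : ThickIdeal C, I.IsSemiprime)
    (I J : ThickIdeal C) :
    thickIdealGen C (Set.image2 (· ⊗ ·) I.carrier J.carrier) =
      I.carrier ∩ J.carrier := by
  set S := Set.image2 (fun a b : C => a ⊗ b) I.carrier J.carrier with hSdef
  apply Set.Subset.antisymm
  · -- gen ⊆ I ∩ J : I ∩ J is a thick ideal containing S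
    intro x hx
    constructor
    · exact hx I (by rintro _ ⟨a, ha, b, hb, rfl⟩; exact I.tensor_right_mem b ha)
    · exact hx J (by rintro _ ⟨a, ha, b, hb, rfl⟩; exact J.tensor_left_mem a hb)
  · -- I ∩ J ⊆ gen, using semiprimeness of the generated ideal
    obtain ⟨Ps, hPs, hcar⟩ := h (genIdeal S)
    intro x hx
    show x ∈ (genIdeal S).carrier
    rw [hcar]
    refine Set.mem_iInter₂.2 fun P hP => ?_
    have hsub : (genIdeal S).carrier ⊆ P.carrier := by
      rw [hcar]; exact Set.biInter_subset_of_mem hP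
    have hmem : ∀ a ∈ I.carrier, ∀ b ∈ J.carrier, a ⊗ b ∈ P.carrier := by
      intro a ha b hb
      exact hsub (fun K hK => hK (Set.mem_image2_of_mem ha hb))
    rcases (hPs P hP).2 I J hmem with h' | h'
    · exact h' hx.1
    · exact h' hx.2
end

section
/- Let K be a rigid monoidal triangulated category in which every object V is a direct summand of V ⊗ V* ⊗ V. Then every thick two-sided ideal I of K is semiprime, i.e., for every object V, if V ⊗ C ⊗ V ∈ I for all objects C of K, then V ∈ I. -/
open CategoryTheory CategoryTheory.Limits CategoryTheory.Pretriangulated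
open CategoryTheory.MonoidalCategory ZeroObject

universe u v

variable (C : Type u) [Category.{v} C] [HasZeroObject C] [HasShift C ℤ]
  [Preadditive C] [∀ n : ℤ, (CategoryTheory.shiftFunctor C n).Additive]
  [Pretriangulated C] [HasBinaryBiproducts C] [MonoidalCategory C]

variable {C}

variable (C)

variable {C}

/-- in a rigid MΔC where every `V` is a summand of
`V ⊗ V* ⊗ V`, every thick ideal is semiprime (object-wise condition). -/
theorem every_ideal_semiprime [RightRigidCategory C]
    (hsummand : ∀ V : C, ∃ W : C, Nonempty ((V ⊗ Vᘁ ⊗ V) ≅ V ⊞ W)) :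
    ∀ (I : ThickIdeal C) (V : C),
      (∀ D : C, V ⊗ D ⊗ V ∈ I.carrier) → V ∈ I.carrier := by
  intro I V h
  obtain ⟨W, ⟨e⟩⟩ := hsummand V
  exact I.summand_mem (I.iso_closed e (h (Vᘁ)))
end

section
/- Let K be a compactly generated monoidal triangulated category and σ : K → 𝒳 an extended weak support datum for a Zariski space X such that Φ_σ(⟨C⟩) is closed for every compact C, and suppose σ satisfies the realization property (every closed subset of X is of the form Φ_σ(⟨M⟩) for some compact M). Then Φ_σ ∘ Θ_σ = id on specialization-closed subsets of X, where Θ_σ(W) = { M ∈ K^c : Φ_σ(⟨M⟩) ⊆ W } and Φ_σ(I) = ⋃_{M ∈ I} σ(M). -/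
open CategoryTheory CategoryTheory.Limits CategoryTheory.Pretriangulated
open CategoryTheory.MonoidalCategory ZeroObject

universe u v

variable (C : Type u) [Category.{v} C] [HasZeroObject C] [HasShift C ℤ]
  [Preadditive C] [∀ n : ℤ, (CategoryTheory.shiftFunctor C n).Additive]
  [Pretriangulated C] [HasBinaryBiproducts C] [MonoidalCategory C]

variable {C}

variable (C)

variable {C}

/-- `Φ_σ ∘ Θ_σ = id` on specialization-closed subsets of a
Zariski space, given the realization property. -/
theorem phi_theta_id (X : Type*) [TopologicalSpace X]
    [TopologicalSpace.NoetherianSpace X] [QuasiSober X] [T0Space X]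
    (σ : WeakSupportDatum C X)
    (hcl : ∀ A : C, IsClosed (Phi σ.σ (thickIdealGen C {A})))
    (hreal : ∀ W : Set X, IsClosed W →
      ∃ M : C, Phi σ.σ (thickIdealGen C {M}) = W)
    (W : Set X) (hW : SpecClosed W) :
    Phi σ.σ {M : C | Phi σ.σ (thickIdealGen C {M}) ⊆ W} = W := by
  ext x
  simp only [Phi, Set.mem_iUnion, Set.mem_setOf_eq]
  constructor
  · rintro ⟨A, hA, hx⟩
    exact hA (Set.mem_iUnion.2 ⟨A, Set.mem_iUnion.2
      ⟨fun I hI => hI (Set.mem_singleton A), hx⟩⟩)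
  · intro hx
    obtain ⟨F, hF, rfl⟩ := hW
    obtain ⟨s, hs, hxs⟩ := hx
    obtain ⟨M, hM⟩ := hreal s (hF s hs)
    rw [← hM] at hxs
    simp only [Phi, Set.mem_iUnion] at hxs
    obtain ⟨A, hA, hxA⟩ := hxs
    refine ⟨A, fun y hy => ?_, hxA⟩
    simp only [Phi, Set.mem_iUnion] at hy
    obtain ⟨B, hB, hyB⟩ := hy
    have hBM : B ∈ thickIdealGen C {M} := fun I hI =>
      hB I (Set.singleton_subset_iff.2 (hA I hI))
    exact Set.mem_sUnion.2 ⟨s, hs, hM ▸ Set.mem_iUnion.2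
      ⟨B, Set.mem_iUnion.2 ⟨hBM, hyB⟩⟩⟩
end
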